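/- Fix a generalized metric G^b on M determined by (g,b). The TM-torsion free G^b-metric connections on 𝕋M are classified by 3-forms φ ∈ Ω³(M): for every φ there is a unique TM-torsion free G^b-metric connection D^{φ,b} whose G^b-eigendecomposition is D^{φ,b}_{x^{b±}} y^{b±} = ∇_X Y + (b±g)(∇_X Y) and D^{φ,b}_{x^{b∓}} y^{b±} = ∇^{±φ}_X Y + (b±g)(∇^{±φ}_X Y); conversely, every TM-torsion free G^b-metric connection D^𝕋 equals D^{φ,b} for exactly one φ ∈ Ω³(M), recovered by φ(X,Y,Z) = 2 g(π(D^𝕋_{x^{b−}} y^{b+}) − ∇_X Y, Z). Moreover, in the splitting 𝕋M = TM ⊕ T*M, D^{φ,b}_{e^b x}(e^b y) = e^b[ ∇_X y + (1/4) g^{-1}(ι_{g^{-1}η} ι_X φ − ι_Y ι_{g^{-1}ξ} φ) + (1/4)(ι_Y ι_X φ − ι_{g^{-1}η} ι_{g^{-1}ξ} φ) ] for x = X+ξ, y = Y+η, where e^b(X+ξ) = X + ι_X b + ξ. -/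

import Mathlib

/-!
An algebraic model of generalized geometry on a smooth manifold `M`:
`C` plays the role of the smooth functions `C^∞(M)`, `Xv` the `C`-module of
vector fields `Γ(TM)` (acting on functions via `act` and with Lie bracket `lie`),
`Θ` the `C`-module of 1-forms `Γ(T*M)` (with evaluation `ev`), and
`TT Xv Θ := Xv × Θ` the sections of the generalized tangent bundle
`𝕋M = TM ⊕ T*M`.
-/

noncomputable section

namespace GenGeom

section Core

variable {C : Type} [CommRing C] [Algebra ℝ C]
variable {Xv : Type} [AddCommGroup Xv] [Module C Xv] [Module ℝ Xv] [IsScalarTower ℝ C Xv]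
variable {Θ : Type} [AddCommGroup Θ] [Module C Θ] [Module ℝ Θ] [IsScalarTower ℝ C Θ]

/-- Sections of the generalized tangent bundle `𝕋M = TM ⊕ T*M`. -/
abbrev TT (Xv Θ : Type) := Xv × Θ

/-- The natural pairing `⟨X+ξ, Y+η⟩ = ½(η(X) + ξ(Y))` on `𝕋M`. -/
def pairTT (ev : Θ → Xv → C) (x y : TT Xv Θ) : C :=
  (2:ℝ)⁻¹ • (ev x.2 y.1 + ev y.2 x.1)

/-- Axioms for the action of vector fields on functions and the Lie bracket. -/
structure IsDiffStructure (act : Xv → C → C) (lie : Xv → Xv → Xv) : Prop where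
  act_add_left : ∀ Z W f, act (Z + W) f = act Z f + act W f
  act_smul_left : ∀ (f : C) Z g, act (f • Z) g = f * act Z g
  act_add_right : ∀ Z f g, act Z (f + g) = act Z f + act Z g
  act_mul_right : ∀ Z f g, act Z (f * g) = f * act Z g + g * act Z f
  act_const : ∀ Z (r : ℝ), act Z (algebraMap ℝ C r) = 0
  lie_antisymm : ∀ Z W, lie Z W = - lie W Z
  lie_add_right : ∀ Z W U, lie Z (W + U) = lie Z W + lie Z U
  lie_smul_right : ∀ Z (f : C) W, lie Z (f • W) = act Z f • W + f • lie Z W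
  lie_jacobi : ∀ Z W U, lie (lie Z W) U = lie Z (lie W U) - lie W (lie Z U)
  lie_act : ∀ Z W f, act (lie Z W) f = act Z (act W f) - act W (act Z f)
  act_faithful : ∀ Z, (∀ f, act Z f = 0) → Z = 0

/-- Axioms for the evaluation of 1-forms on vector fields; on a smooth manifold
`Γ(T*M) ≅ Hom_{C^∞}(Γ(TM), C^∞)`, so `ev` is bilinear and faithful. -/
structure IsEvStructure (ev : Θ → Xv → C) : Prop where
  add_left : ∀ ξ η X, ev (ξ + η) X = ev ξ X + ev η X
  smul_left : ∀ (f : C) ξ X, ev (f • ξ) X = f * ev ξ X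
  add_right : ∀ ξ X Y, ev ξ (X + Y) = ev ξ X + ev ξ Y
  smul_right : ∀ ξ (f : C) X, ev ξ (f • X) = f * ev ξ X
  ev_injective : ∀ ξ η, (∀ X, ev ξ X = ev η X) → ξ = η

/-- A generalized connection on `𝕋M`. -/
structure IsGenConn (act : Xv → C → C) (D : TT Xv Θ → TT Xv Θ → TT Xv Θ) : Prop where
  add_left : ∀ x y z, D (x + y) z = D x z + D y z
  smul_left : ∀ (f : C) x y, D (f • x) y = f • D x y
  add_right : ∀ x y z, D x (y + z) = D x y + D x z
  leibniz : ∀ x (f : C) y, D x (f • y) = act x.1 f • y + f • D x y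

/-- A generalized connection on a vector bundle with `C`-module of sections `V`. -/
structure IsGenConnOn {V : Type} [AddCommGroup V] [Module C V]
    (act : Xv → C → C) (DV : TT Xv Θ → V → V) : Prop where
  add_left : ∀ x y v, DV (x + y) v = DV x v + DV y v
  smul_left : ∀ (f : C) x v, DV (f • x) v = f • DV x v
  add_right : ∀ x v w, DV x (v + w) = DV x v + DV x w
  leibniz : ∀ x (f : C) v, DV x (f • v) = act x.1 f • v + f • DV x v

/-- The diamond bracket `x ◇ y = D_x y - D_y x` of a generalized connection. -/
def diamond (D : TT Xv Θ → TT Xv Θ → TT Xv Θ) (x y : TT Xv Θ) : TT Xv Θ := D x y - D y x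

/-- The Jacobiator `[x ◇ y ◇ z] = (x ◇ y) ◇ z + (y ◇ z) ◇ x + (z ◇ x) ◇ y`. -/
def jacobiator (D : TT Xv Θ → TT Xv Θ → TT Xv Θ) (x y z : TT Xv Θ) : TT Xv Θ :=
  diamond D (diamond D x y) z + diamond D (diamond D y z) x + diamond D (diamond D z x) y

/-- `TM`-torsion freeness: `π(x ◇ y) = [π x, π y]`. -/
def TorsionFree (lie : Xv → Xv → Xv) (D : TT Xv Θ → TT Xv Θ → TT Xv Θ) : Prop :=
  ∀ x y : TT Xv Θ, (diamond D x y).1 = lie x.1 y.1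

/-- Raw `𝕋M`-forms of degree `k`; genuine forms `Ω^k_𝕋(M) = Γ(Λ^k 𝕋M)` are the
`C`-multilinear alternating ones (cf. `IsFormP`), regarded as forms via `2⟨,⟩`. -/
abbrev Wform (C Xv Θ : Type) (k : ℕ) : Type := (Fin k → TT Xv Θ) → C

/-- Being a genuine (C-multilinear alternating) `𝕋M`-form. -/
def IsFormP {k : ℕ} (θ : Wform C Xv Θ k) : Prop :=
  (∀ (v : Fin k → TT Xv Θ) (i : Fin k) (x y : TT Xv Θ),
      θ (Function.update v i (x + y)) = θ (Function.update v i x) + θ (Function.update v i y)) ∧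
  (∀ (v : Fin k → TT Xv Θ) (i : Fin k) (f : C) (x : TT Xv Θ),
      θ (Function.update v i (f • x)) = f * θ (Function.update v i x)) ∧
  (∀ (v : Fin k → TT Xv Θ) (i j : Fin k), i ≠ j → v i = v j → θ v = 0)

/-- Covariant derivative of an `A`-valued `𝕋M`-form along `x`. -/
def covDG {A : Type} [AddCommGroup A] (actA : Xv → A → A)
    (D : TT Xv Θ → TT Xv Θ → TT Xv Θ) (x : TT Xv Θ) {k : ℕ}
    (θ : (Fin k → TT Xv Θ) → A) : (Fin k → TT Xv Θ) → A :=
  fun v => actA x.1 (θ v) - ∑ i, θ (Function.update v i (D x (v i)))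

/-- The derivation `d^𝕋` of `𝕋M`-forms induced by a generalized connection:
`(d^𝕋θ)(x₀,…,x_k) = Σ_i (−1)^i (D_{x_i}θ)(x₀,…,x̂_i,…,x_k)`. -/
def dTG {A : Type} [AddCommGroup A] (actA : Xv → A → A)
    (D : TT Xv Θ → TT Xv Θ → TT Xv Θ) {k : ℕ}
    (θ : (Fin k → TT Xv Θ) → A) : (Fin (k+1) → TT Xv Θ) → A :=
  fun v => ∑ i : Fin (k+1), ((-1 : ℤ)^(i : ℕ)) • covDG actA D (v i) θ (i.removeNth v)

/-- `d^𝕋` on scalar `𝕋M`-forms. -/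
abbrev dT (act : Xv → C → C) (D : TT Xv Θ → TT Xv Θ → TT Xv Θ) {k : ℕ}
    (θ : Wform C Xv Θ k) : Wform C Xv Θ (k+1) := dTG act D θ

/-- The submodule generated by the image of `𝒥^𝕋 = d^𝕋 ∘ d^𝕋` in each degree. -/
def JsubG {A : Type} [AddCommGroup A] (R : Type) [CommRing R] [Module R A]
    (actA : Xv → A → A) (D : TT Xv Θ → TT Xv Θ → TT Xv Θ) :
    (k : ℕ) → Submodule R ((Fin k → TT Xv Θ) → A)
  | 0 => ⊥
  | 1 => ⊥
  | (k+2) => Submodule.span R {ψ | ∃ θ : (Fin k → TT Xv Θ) → A, ψ = dTG actA D (dTG actA D θ)}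

/-- Contraction `ι_x` of `𝕋M`-forms (under the identification via `2⟨,⟩`). -/
def iotaTT (x : TT Xv Θ) {k : ℕ} (θ : Wform C Xv Θ (k+1)) : Wform C Xv Θ k :=
  fun v => θ (Fin.cons x v)

/-- A Riemannian metric, presented by its musical maps `♭ = gf` and `♯ = gs`. -/
structure IsRiemannian (ev : Θ → Xv → C) (gf : Xv → Θ) (gs : Θ → Xv) : Prop where
  symm : ∀ X Y, ev (gf X) Y = ev (gf Y) X
  add : ∀ X Y, gf (X + Y) = gf X + gf Y
  smul : ∀ (f : C) X, gf (f • X) = f • gf X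
  sharp_flat : ∀ X, gs (gf X) = X
  flat_sharp : ∀ ξ, gf (gs ξ) = ξ

/-- A 2-form `b`, presented by its interior product `X ↦ ι_X b`. -/
structure IsTwoFormMap (ev : Θ → Xv → C) (ib : Xv → Θ) : Prop where
  skew : ∀ X Y, ev (ib X) Y = - ev (ib Y) X
  add : ∀ X Y, ib (X + Y) = ib X + ib Y
  smul : ∀ (f : C) X, ib (f • X) = f • ib X

/-- The scalar metric `g(X,Y)`. -/
def gsc (ev : Θ → Xv → C) (gf : Xv → Θ) (X Y : Xv) : C := ev (gf X) Y
/-- The scalar 2-form `b(X,Y)`. -/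
def bsc (ev : Θ → Xv → C) (ib : Xv → Θ) (X Y : Xv) : C := ev (ib X) Y

/-- `x^{b+} = X + (b+g)X ∈ C₊^b`. -/
def ebp (gf ib : Xv → Θ) (X : Xv) : TT Xv Θ := (X, ib X + gf X)
/-- `x^{b-} = X + (b−g)X ∈ C₋^b`. -/
def ebm (gf ib : Xv → Θ) (X : Xv) : TT Xv Θ := (X, ib X - gf X)
/-- `e^b(X+ξ) = X + ι_X b + ξ`. -/
def ebMap (ib : Xv → Θ) (x : TT Xv Θ) : TT Xv Θ := (x.1, x.2 + ib x.1)

/-- The generalized metric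
`G^b(X+ξ, Y+η) = ½[g(X,Y) + g⁻¹(ξ − ι_X b, η − ι_Y b)]` as a bilinear form. -/
def GbForm (ev : Θ → Xv → C) (gf : Xv → Θ) (gs : Θ → Xv) (ib : Xv → Θ)
    (x y : TT Xv Θ) : C :=
  (2:ℝ)⁻¹ • (ev (gf x.1) y.1 + ev (x.2 - ib x.1) (gs (y.2 - ib y.1)))

/-- A `G^b`-metric connection: preserves both `⟨,⟩` and `G^b`. -/
def IsMetricConn (act : Xv → C → C) (ev : Θ → Xv → C) (gf : Xv → Θ) (gs : Θ → Xv)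
    (ib : Xv → Θ) (D : TT Xv Θ → TT Xv Θ → TT Xv Θ) : Prop :=
  (∀ x y z, act x.1 (pairTT ev y z) = pairTT ev (D x y) z + pairTT ev y (D x z)) ∧
  (∀ x y z, act x.1 (GbForm ev gf gs ib y z)
      = GbForm ev gf gs ib (D x y) z + GbForm ev gf gs ib y (D x z))

/-- The Levi-Civita connection of `g`. -/
structure IsLeviCivita (act : Xv → C → C) (lie : Xv → Xv → Xv) (ev : Θ → Xv → C)
    (gf : Xv → Θ) (nab : Xv → Xv → Xv) : Prop where
  add_left : ∀ X Y Z, nab (X + Y) Z = nab X Z + nab Y Z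
  smul_left : ∀ (f : C) X Y, nab (f • X) Y = f • nab X Y
  add_right : ∀ X Y Z, nab X (Y + Z) = nab X Y + nab X Z
  leibniz : ∀ X (f : C) Y, nab X (f • Y) = act X f • Y + f • nab X Y
  torsion_free : ∀ X Y, nab X Y - nab Y X = lie X Y
  metric : ∀ X Y Z, act X (gsc ev gf Y Z) = gsc ev gf (nab X Y) Z + gsc ev gf Y (nab X Z)

/-- A 3-form `φ`, presented by its interior products `iph X Y = ι_Y ι_X φ = φ(X,Y,·)`. -/
structure IsThreeFormMap (ev : Θ → Xv → C) (iph : Xv → Xv → Θ) : Prop where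
  add_left : ∀ X Y Z, iph (X + Y) Z = iph X Z + iph Y Z
  smul_left : ∀ (f : C) X Y, iph (f • X) Y = f • iph X Y
  add_right : ∀ X Y Z, iph X (Y + Z) = iph X Y + iph X Z
  smul_right : ∀ X (f : C) Y, iph X (f • Y) = f • iph X Y
  alt12 : ∀ X Y Z, ev (iph X Y) Z = - ev (iph Y X) Z
  alt23 : ∀ X Y Z, ev (iph X Y) Z = - ev (iph X Z) Y

/-- `∇^{+φ}_X Y = ∇_X Y + ½ g⁻¹ ι_Y ι_X φ`. -/
def nabP (gs : Θ → Xv) (nab : Xv → Xv → Xv) (iph : Xv → Xv → Θ) (X Y : Xv) : Xv :=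
  nab X Y + (2:ℝ)⁻¹ • gs (iph X Y)
/-- `∇^{-φ}_X Y = ∇_X Y − ½ g⁻¹ ι_Y ι_X φ`. -/
def nabM (gs : Θ → Xv) (nab : Xv → Xv → Xv) (iph : Xv → Xv → Θ) (X Y : Xv) : Xv :=
  nab X Y - (2:ℝ)⁻¹ • gs (iph X Y)

/-- `C₊^b`-component of `x = X + ξ`: `X₊ = ½(X + g⁻¹(ξ − ι_X b))`. -/
def decP (gs : Θ → Xv) (ib : Xv → Θ) (x : TT Xv Θ) : Xv :=
  (2:ℝ)⁻¹ • (x.1 + gs (x.2 - ib x.1))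
/-- `C₋^b`-component of `x = X + ξ`: `X₋ = ½(X − g⁻¹(ξ − ι_X b))`. -/
def decM (gs : Θ → Xv) (ib : Xv → Θ) (x : TT Xv Θ) : Xv :=
  (2:ℝ)⁻¹ • (x.1 - gs (x.2 - ib x.1))

/-- The `(φ,b)`-connection `D^{φ,b}`, defined through its `G^b`-eigendecomposition. -/
def Dphib (gf : Xv → Θ) (gs : Θ → Xv) (ib : Xv → Θ) (nab : Xv → Xv → Xv)
    (iph : Xv → Xv → Θ) (x y : TT Xv Θ) : TT Xv Θ :=
  ebp gf ib (nab (decP gs ib x) (decP gs ib y))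
  + ebm gf ib (nabM gs nab iph (decP gs ib x) (decM gs ib y))
  + ebp gf ib (nabP gs nab iph (decM gs ib x) (decP gs ib y))
  + ebm gf ib (nab (decM gs ib x) (decM gs ib y))

/-- The generalized Bismut connection `D^{φ,ℬ}`, lift of
`∇^{φ,ℬ}_X y^{b±} = ∇^{±φ}_X Y + (b±g)(∇^{±φ}_X Y)`. -/
def DBismut (gf : Xv → Θ) (gs : Θ → Xv) (ib : Xv → Θ) (nab : Xv → Xv → Xv)
    (iph : Xv → Xv → Θ) (x y : TT Xv Θ) : TT Xv Θ :=
  ebp gf ib (nabP gs nab iph x.1 (decP gs ib y))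
  + ebm gf ib (nabM gs nab iph x.1 (decM gs ib y))

/-- The de Rham differential on functions, as data. -/
structure IsDifferential (act : Xv → C → C) (ev : Θ → Xv → C) (dC : C → Θ) : Prop where
  formula : ∀ f X, ev (dC f) X = act X f

/-- The Lie derivative of 1-forms, as data. -/
structure IsLieDerivTheta (act : Xv → C → C) (lie : Xv → Xv → Xv) (ev : Θ → Xv → C)
    (LTh : Xv → Θ → Θ) : Prop where
  formula : ∀ X η Y, ev (LTh X η) Y = act X (ev η Y) - ev η (lie X Y)

/-- The `γ`-twisted Dorfman bracket
`(X+ξ) *_γ (Y+η) = [X,Y] + L_X η − dι_Y ξ + ι_Yι_X γ` (with `ig X Y = ι_Yι_X γ`). -/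
def dorf (lie : Xv → Xv → Xv) (ev : Θ → Xv → C) (dC : C → Θ) (LTh : Xv → Θ → Θ)
    (ig : Xv → Xv → Θ) (x y : TT Xv Θ) : TT Xv Θ :=
  (lie x.1 y.1, LTh x.1 y.2 - dC (ev x.2 y.1) + ig x.1 y.1)

/-- Closedness `dγ = 0` of a 3-form given by its interior products. -/
def Closed3 (act : Xv → C → C) (lie : Xv → Xv → Xv) (ev : Θ → Xv → C)
    (ig : Xv → Xv → Θ) : Prop :=
  ∀ X Y Z W,
    act X (ev (ig Y Z) W) - act Y (ev (ig X Z) W) + act Z (ev (ig X Y) W)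
      - act W (ev (ig X Y) Z)
      - ev (ig (lie X Y) Z) W + ev (ig (lie X Z) Y) W - ev (ig (lie X W) Y) Z
      - ev (ig (lie Y Z) X) W + ev (ig (lie Y W) X) Z - ev (ig (lie Z W) X) Y = 0

/-- The scalar exterior differential `db(X,Y,Z)` of the 2-form `b`. -/
def dbScalar (act : Xv → C → C) (lie : Xv → Xv → Xv) (ev : Θ → Xv → C)
    (ib : Xv → Θ) (X Y Z : Xv) : C :=
  act X (bsc ev ib Y Z) - act Y (bsc ev ib X Z) + act Z (bsc ev ib X Y)
    - bsc ev ib (lie X Y) Z + bsc ev ib (lie X Z) Y - bsc ev ib (lie Y Z) X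

/-- `φ = γ + db` at the level of scalar 3-forms. -/
def PhiEqGammaPlusDb (act : Xv → C → C) (lie : Xv → Xv → Xv) (ev : Θ → Xv → C)
    (ib : Xv → Θ) (ig iph : Xv → Xv → Θ) : Prop :=
  ∀ X Y Z, ev (iph X Y) Z = ev (ig X Y) Z + dbScalar act lie ev ib X Y Z

/-- Metric compatibility of a `G^b`-metric connection with the Dorfman bracket `*_γ`:
the diamond bracket coincides with `*_γ` on mixed `G^b`-eigensections. -/
def MetricCompatDorfman (lie : Xv → Xv → Xv) (ev : Θ → Xv → C) (dC : C → Θ)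
    (LTh : Xv → Θ → Θ) (ig : Xv → Xv → Θ) (gf ib : Xv → Θ)
    (D : TT Xv Θ → TT Xv Θ → TT Xv Θ) : Prop :=
  ∀ X Y : Xv,
    diamond D (ebp gf ib X) (ebm gf ib Y) = dorf lie ev dC LTh ig (ebp gf ib X) (ebm gf ib Y)

/-- The curvature `ℱ^𝕋_{x,y}(D) = D_x D_y − D_y D_x − D_{x ◇_𝕋 y}` of a generalized
connection `DV` on `V`, with respect to a generalized connection `DT` on `𝕋M`. -/
def curvOn {V : Type} [AddCommGroup V]
    (DT : TT Xv Θ → TT Xv Θ → TT Xv Θ) (DV : TT Xv Θ → V → V)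
    (x y : TT Xv Θ) (v : V) : V :=
  DV x (DV y v) - DV y (DV x v) - DV (diamond DT x y) v

/-- A (global) `g`-orthonormal frame. -/
structure IsONFrame (ev : Θ → Xv → C) (gf : Xv → Θ) {n : ℕ} (e : Fin n → Xv) : Prop where
  ortho : ∀ i j, ev (gf (e i)) (e j) = if i = j then 1 else 0
  complete : ∀ X : Xv, X = ∑ i, gsc ev gf X (e i) • e i

/-- The `(φ,b)`-Ricci curvature operator
`ℛic^{φ,b}(x) = Σ_i [ℛ^{φ,b}_{x,e_i^{b+}} e_i^{b+} + ℛ^{φ,b}_{x,e_i^{b−}} e_i^{b−}]`. -/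
def RicPhib (gf : Xv → Θ) (gs : Θ → Xv) (ib : Xv → Θ) (nab : Xv → Xv → Xv)
    (iph : Xv → Xv → Θ) {n : ℕ} (e : Fin n → Xv) (x : TT Xv Θ) : TT Xv Θ :=
  ∑ i, (curvOn (Dphib gf gs ib nab iph) (Dphib gf gs ib nab iph)
          x (ebp gf ib (e i)) (ebp gf ib (e i))
        + curvOn (Dphib gf gs ib nab iph) (Dphib gf gs ib nab iph)
          x (ebm gf ib (e i)) (ebm gf ib (e i)))

end Core

end GenGeom

end

namespace GenGeom

/-- Covariant derivative of 1-forms by the Levi-Civita connection, as data: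
`(∇_X η)(Y) = X(η(Y)) − η(∇_X Y)`. -/
structure IsNabTheta {C : Type} [CommRing C] [Algebra ℝ C]
    {Xv : Type} [AddCommGroup Xv] [Module C Xv]
    {Θ : Type} [AddCommGroup Θ] [Module C Θ]
    (act : Xv → C → C) (ev : Θ → Xv → C) (nab : Xv → Xv → Xv)
    (nabT : Xv → Θ → Θ) : Prop where
  formula : ∀ X η Y, ev (nabT X η) Y = act X (ev η Y) - ev η (nab X Y)

/-!
The eigenbundles `C±^b` of `G^b` are `⟨,⟩`-orthogonal and `G^b = ±⟨,⟩` against `C±^b`, so being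
metric for both `⟨,⟩` and `G^b` means that `D^𝕋` preserves `C₊^b` and `C₋^b` and that its four
components `π(D^𝕋_{x^{b±}} y^{b±})` are `g`-metric. Torsion freeness then makes the two pure
components torsion free, hence equal to `∇` by uniqueness of the Levi-Civita connection. For the
mixed ones, `S(X,Y) = π(D^𝕋_{x^{b−}} y^{b+}) − ∇_X Y` is `g`-skew in its second argument by
metricity, and torsion freeness gives `π(D^𝕋_{x^{b+}} y^{b−}) = ∇_X Y + S(Y,X)`, which is metric as
well; together these make `g(S(X,Y),Z)` alternating, i.e. `φ = 2 g(S(·,·),·)` is a 3-form, and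
`D^𝕋 = D^{φ,b}` because both are additive and agree on eigensections. The formula in the splitting
`𝕋M = TM ⊕ T*M` is a direct expansion of `D^{φ,b}` with `e^{-b}x = X+ξ` decomposed as
`X± = ½(X ± g⁻¹ξ)`.
-/

section RealModule

variable {M : Type*} [AddCommGroup M] [Module ℝ M]

lemma eq_zero_of_eq_neg {a : M} (h : a = -a) : a = 0 := by
  have h2 : (2:ℝ) • a = 0 := by
    rw [two_smul]
    nth_rewrite 2 [h]
    exact add_neg_cancel a
  exact (smul_eq_zero.mp h2).resolve_left two_ne_zero

lemma eq_zero_of_symm_of_skew {α : Type*} (F : α → α → α → M)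
    (hsymm : ∀ a b c, F a b c = F b a c) (hskew : ∀ a b c, F a b c = -F a c b) (a b c : α) :
    F a b c = 0 :=
  eq_zero_of_eq_neg <| calc
    F a b c = -F a c b := hskew a b c
    _ = -F c a b := by rw [hsymm]
    _ = F c b a := by rw [hskew c a b, neg_neg]
    _ = F b c a := by rw [hsymm]
    _ = -F b a c := hskew b c a
    _ = -F a b c := by rw [hsymm]

lemma map_real_smul {C A B : Type*} [CommRing C] [Algebra ℝ C] [AddCommGroup A] [Module C A]
    [Module ℝ A] [IsScalarTower ℝ C A] [AddCommGroup B] [Module C B] [Module ℝ B]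
    [IsScalarTower ℝ C B] {f : A → B} (hf : ∀ (c : C) a, f (c • a) = c • f a) (r : ℝ) (a : A) :
    f (r • a) = r • f a := by
  rw [← smul_one_smul C r a, hf, smul_one_smul]

end RealModule

lemma pairTT_comm {C Xv Θ : Type} [CommRing C] [Algebra ℝ C] {ev : Θ → Xv → C} (x y : TT Xv Θ) :
    pairTT ev x y = pairTT ev y x := by
  rw [pairTT, pairTT, add_comm]

def IsMetricAlong {C Xv Θ : Type} [Add C] (act : Xv → C → C) (ev : Θ → Xv → C) (gf : Xv → Θ)
    (A : Xv) (N : Xv → Xv) : Prop :=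
  ∀ Y Z, act A (gsc ev gf Y Z) = gsc ev gf (N Y) Z + gsc ev gf Y (N Z)

section

variable {Xv Θ : Type} [AddCommGroup Xv] [Module ℝ Xv] [AddCommGroup Θ] {gs : Θ → Xv}
  {ib : Xv → Θ}

lemma decP_add_decM (x : TT Xv Θ) : decP gs ib x + decM gs ib x = x.1 := by
  simp only [decP, decM]
  module

lemma decP_sub_decM (x : TT Xv Θ) : decP gs ib x - decM gs ib x = gs (x.2 - ib x.1) := by
  simp only [decP, decM]
  module

end

section Structures

variable {C : Type} [CommRing C] {Xv : Type} [AddCommGroup Xv] [Module C Xv] {Θ : Type}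
variable {act : Xv → C → C} {lie : Xv → Xv → Xv} {ev : Θ → Xv → C}
variable {gf : Xv → Θ} {gs : Θ → Xv} {ib : Xv → Θ} {nab : Xv → Xv → Xv} {iph : Xv → Xv → Θ}

namespace IsLeviCivita

lemma isMetricAlong (hnab : IsLeviCivita act lie ev gf nab) (A : Xv) :
    IsMetricAlong act ev gf A (nab A) :=
  hnab.metric A

lemma zero_left (hnab : IsLeviCivita act lie ev gf nab) (Y : Xv) : nab 0 Y = 0 :=
  map_zero (AddMonoidHom.mk' (nab · Y) (hnab.add_left · · Y))

lemma zero_right (hnab : IsLeviCivita act lie ev gf nab) (X : Xv) : nab X 0 = 0 :=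
  map_zero (AddMonoidHom.mk' (nab X) (hnab.add_right X))

lemma sub_right (hnab : IsLeviCivita act lie ev gf nab) (X Y Z : Xv) :
    nab X (Y - Z) = nab X Y - nab X Z :=
  map_sub (AddMonoidHom.mk' (nab X) (hnab.add_right X)) Y Z

end IsLeviCivita

section

variable [AddCommGroup Θ]

lemma fst_apply_ebp_ebm {D : TT Xv Θ → TT Xv Θ → TT Xv Θ} (hnab : IsLeviCivita act lie ev gf nab)
    (htf : TorsionFree lie D) (A B : Xv) :
    (D (ebp gf ib A) (ebm gf ib B)).1 - nab A B = (D (ebm gf ib B) (ebp gf ib A)).1 - nab B A := by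
  have h : (D (ebm gf ib B) (ebp gf ib A)).1 - (D (ebp gf ib A) (ebm gf ib B)).1 = lie B A :=
    htf (ebm gf ib B) (ebp gf ib A)
  rw [← hnab.torsion_free] at h
  linear_combination (norm := abel) -h

variable [Module ℝ Xv]

lemma Dphib_fst (hnab : IsLeviCivita act lie ev gf nab) (x y : TT Xv Θ) :
    (Dphib gf gs ib nab iph x y).1 = nab x.1 y.1
      + (2:ℝ)⁻¹ • gs (iph (decM gs ib x) (decP gs ib y))
      - (2:ℝ)⁻¹ • gs (iph (decP gs ib x) (decM gs ib y)) := by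
  rw [← decP_add_decM (gs := gs) (ib := ib) x, ← decP_add_decM (gs := gs) (ib := ib) y]
  simp only [Dphib, Prod.fst_add, ebp, ebm, nabP, nabM, hnab.add_left, hnab.add_right]
  abel

end

variable [AddCommGroup Θ] [Module C Θ]

namespace IsEvStructure

lemma zero_left (hev : IsEvStructure ev) (X : Xv) : ev 0 X = 0 :=
  map_zero (AddMonoidHom.mk' (ev · X) (hev.add_left · · X))

lemma neg_left (hev : IsEvStructure ev) (ξ : Θ) (X : Xv) : ev (-ξ) X = -ev ξ X :=
  map_neg (AddMonoidHom.mk' (ev · X) (hev.add_left · · X)) ξ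

lemma sub_left (hev : IsEvStructure ev) (ξ η : Θ) (X : Xv) : ev (ξ - η) X = ev ξ X - ev η X :=
  map_sub (AddMonoidHom.mk' (ev · X) (hev.add_left · · X)) ξ η

lemma neg_right (hev : IsEvStructure ev) (ξ : Θ) (X : Xv) : ev ξ (-X) = -ev ξ X :=
  map_neg (AddMonoidHom.mk' (ev ξ) (hev.add_right ξ)) X

lemma sub_right (hev : IsEvStructure ev) (ξ : Θ) (X Y : Xv) :
    ev ξ (X - Y) = ev ξ X - ev ξ Y :=
  map_sub (AddMonoidHom.mk' (ev ξ) (hev.add_right ξ)) X Y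

end IsEvStructure

namespace IsRiemannian

lemma flat_zero (hg : IsRiemannian ev gf gs) : gf 0 = 0 := map_zero (AddMonoidHom.mk' gf hg.add)

lemma flat_sub (hg : IsRiemannian ev gf gs) (X Y : Xv) : gf (X - Y) = gf X - gf Y :=
  map_sub (AddMonoidHom.mk' gf hg.add) X Y

lemma sharp_add (hg : IsRiemannian ev gf gs) (ξ η : Θ) : gs (ξ + η) = gs ξ + gs η := by
  rw [← hg.sharp_flat (gs ξ + gs η), hg.add, hg.flat_sharp, hg.flat_sharp]

lemma sharp_smul (hg : IsRiemannian ev gf gs) (f : C) (ξ : Θ) : gs (f • ξ) = f • gs ξ := by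
  rw [← hg.sharp_flat (f • gs ξ), hg.smul, hg.flat_sharp]

lemma sharp_neg (hg : IsRiemannian ev gf gs) (ξ : Θ) : gs (-ξ) = -gs ξ :=
  map_neg (AddMonoidHom.mk' gs hg.sharp_add) ξ

lemma sharp_sub (hg : IsRiemannian ev gf gs) (ξ η : Θ) : gs (ξ - η) = gs ξ - gs η :=
  map_sub (AddMonoidHom.mk' gs hg.sharp_add) ξ η

lemma sharp_zero (hg : IsRiemannian ev gf gs) : gs 0 = 0 :=
  map_zero (AddMonoidHom.mk' gs hg.sharp_add)

lemma ev_flat_sharp (hg : IsRiemannian ev gf gs) (X : Xv) (ξ : Θ) :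
    ev (gf X) (gs ξ) = ev ξ X := by
  rw [hg.symm, hg.flat_sharp]

lemma ev_sharp_comm (hg : IsRiemannian ev gf gs) (ξ η : Θ) :
    ev ξ (gs η) = ev η (gs ξ) := by
  rw [← hg.ev_flat_sharp (gs ξ) η, hg.flat_sharp]

lemma eq_zero_of_gsc (hev : IsEvStructure ev) (hg : IsRiemannian ev gf gs) {X : Xv}
    (h : ∀ Z, gsc ev gf X Z = 0) : X = 0 := by
  have hX : gf X = 0 := hev.ev_injective _ _ fun Z => (h Z).trans (hev.zero_left Z).symm
  rw [← hg.sharp_flat X, hX, ← hg.flat_zero, hg.sharp_flat]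

end IsRiemannian

namespace IsTwoFormMap

lemma map_zero (hb : IsTwoFormMap ev ib) : ib 0 = 0 := _root_.map_zero (AddMonoidHom.mk' ib hb.add)

end IsTwoFormMap

namespace IsThreeFormMap

lemma zero_left (hiph : IsThreeFormMap ev iph) (Y : Xv) : iph 0 Y = 0 :=
  map_zero (AddMonoidHom.mk' (iph · Y) (hiph.add_left · · Y))

lemma zero_right (hiph : IsThreeFormMap ev iph) (X : Xv) : iph X 0 = 0 :=
  map_zero (AddMonoidHom.mk' (iph X) (hiph.add_right X))

lemma sub_left (hiph : IsThreeFormMap ev iph) (X Y Z : Xv) : iph (X - Y) Z = iph X Z - iph Y Z :=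
  map_sub (AddMonoidHom.mk' (iph · Z) (hiph.add_left · · Z)) X Y

lemma sub_right (hiph : IsThreeFormMap ev iph) (X Y Z : Xv) : iph X (Y - Z) = iph X Y - iph X Z :=
  map_sub (AddMonoidHom.mk' (iph X) (hiph.add_right X)) Y Z

lemma antisymm (hev : IsEvStructure ev) (hiph : IsThreeFormMap ev iph) (X Y : Xv) :
    iph X Y = -iph Y X :=
  hev.ev_injective _ _ fun Z => by rw [hev.neg_left, hiph.alt12]

end IsThreeFormMap

lemma ebp_add (hg : IsRiemannian ev gf gs) (hb : IsTwoFormMap ev ib) (X Y : Xv) :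
    ebp gf ib (X + Y) = ebp gf ib X + ebp gf ib Y :=
  Prod.ext rfl (by simp only [ebp, Prod.snd_add, hg.add, hb.add]; abel)

lemma ebm_add (hg : IsRiemannian ev gf gs) (hb : IsTwoFormMap ev ib) (X Y : Xv) :
    ebm gf ib (X + Y) = ebm gf ib X + ebm gf ib Y :=
  Prod.ext rfl (by simp only [ebm, Prod.snd_add, hg.add, hb.add]; abel)

lemma ebp_smul (hg : IsRiemannian ev gf gs) (hb : IsTwoFormMap ev ib) (f : C) (X : Xv) :
    ebp gf ib (f • X) = f • ebp gf ib X :=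
  Prod.ext rfl (by simp only [ebp, Prod.smul_snd, hg.smul, hb.smul, smul_add])

lemma ebm_smul (hg : IsRiemannian ev gf gs) (hb : IsTwoFormMap ev ib) (f : C) (X : Xv) :
    ebm gf ib (f • X) = f • ebm gf ib X :=
  Prod.ext rfl (by simp only [ebm, Prod.smul_snd, hg.smul, hb.smul, smul_sub])

lemma ebp_zero (hg : IsRiemannian ev gf gs) (hb : IsTwoFormMap ev ib) : ebp gf ib 0 = 0 :=
  Prod.ext rfl (by simp only [ebp, hg.flat_zero, hb.map_zero, add_zero, Prod.snd_zero])

lemma ebm_zero (hg : IsRiemannian ev gf gs) (hb : IsTwoFormMap ev ib) : ebm gf ib 0 = 0 :=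
  Prod.ext rfl (by simp only [ebm, hg.flat_zero, hb.map_zero, sub_zero, Prod.snd_zero])

lemma ebp_add_ebm (hg : IsRiemannian ev gf gs) (hb : IsTwoFormMap ev ib) (U W : Xv) :
    ebp gf ib U + ebm gf ib W = ebMap ib (U + W, gf (U - W)) :=
  Prod.ext rfl (by simp only [ebp, ebm, ebMap, Prod.snd_add, hg.flat_sub, hb.add]; abel)

lemma IsLeviCivita.gsc_sub_skew (hev : IsEvStructure ev) (hg : IsRiemannian ev gf gs)
    (hnab : IsLeviCivita act lie ev gf nab) {A : Xv} {N : Xv → Xv}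
    (hN : IsMetricAlong act ev gf A N) (Y Z : Xv) :
    gsc ev gf (N Y - nab A Y) Z = -gsc ev gf (N Z - nab A Z) Y := by
  have h₁ := hN Y Z
  have h₂ := hnab.metric A Y Z
  simp only [gsc, hg.flat_sub, hev.sub_left] at *
  rw [hg.symm (N Z) Y, hg.symm (nab A Z) Y]
  linear_combination h₂ - h₁

section

variable [Module ℝ Xv]

lemma decP_ebp (hg : IsRiemannian ev gf gs) (X : Xv) : decP gs ib (ebp gf ib X) = X := by
  simp only [decP, ebp, add_sub_cancel_left, hg.sharp_flat]
  module

lemma decM_ebp (hg : IsRiemannian ev gf gs) (X : Xv) : decM gs ib (ebp gf ib X) = 0 := by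
  simp only [decM, ebp, add_sub_cancel_left, hg.sharp_flat, sub_self, smul_zero]

lemma decP_ebm (hg : IsRiemannian ev gf gs) (X : Xv) : decP gs ib (ebm gf ib X) = 0 := by
  simp only [decP, ebm, sub_sub_cancel_left, hg.sharp_neg, hg.sharp_flat, add_neg_cancel,
    smul_zero]

lemma decM_ebm (hg : IsRiemannian ev gf gs) (X : Xv) : decM gs ib (ebm gf ib X) = X := by
  simp only [decM, ebm, sub_sub_cancel_left, hg.sharp_neg, hg.sharp_flat, sub_neg_eq_add]
  module

lemma decP_add (hg : IsRiemannian ev gf gs) (hb : IsTwoFormMap ev ib) (x y : TT Xv Θ) :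
    decP gs ib (x + y) = decP gs ib x + decP gs ib y := by
  simp only [decP, Prod.fst_add, Prod.snd_add, hb.add, add_sub_add_comm, hg.sharp_add]
  module

lemma decM_add (hg : IsRiemannian ev gf gs) (hb : IsTwoFormMap ev ib) (x y : TT Xv Θ) :
    decM gs ib (x + y) = decM gs ib x + decM gs ib y := by
  simp only [decM, Prod.fst_add, Prod.snd_add, hb.add, add_sub_add_comm, hg.sharp_add]
  module

lemma ebp_decP_add_ebm_decM (hg : IsRiemannian ev gf gs) (hb : IsTwoFormMap ev ib)
    (x : TT Xv Θ) : ebp gf ib (decP gs ib x) + ebm gf ib (decM gs ib x) = x := by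
  rw [ebp_add_ebm hg hb, decP_add_decM, decP_sub_decM, hg.flat_sharp]
  exact Prod.ext rfl (sub_add_cancel _ _)

lemma IsGenConn.ext_of_eigen (hg : IsRiemannian ev gf gs) (hb : IsTwoFormMap ev ib)
    {D D' : TT Xv Θ → TT Xv Θ → TT Xv Θ} (hD : IsGenConn act D) (hD' : IsGenConn act D')
    (hpp : ∀ A B, D (ebp gf ib A) (ebp gf ib B) = D' (ebp gf ib A) (ebp gf ib B))
    (hpm : ∀ A B, D (ebp gf ib A) (ebm gf ib B) = D' (ebp gf ib A) (ebm gf ib B))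
    (hmp : ∀ A B, D (ebm gf ib A) (ebp gf ib B) = D' (ebm gf ib A) (ebp gf ib B))
    (hmm : ∀ A B, D (ebm gf ib A) (ebm gf ib B) = D' (ebm gf ib A) (ebm gf ib B)) :
    D = D' := by
  funext x y
  rw [← ebp_decP_add_ebm_decM hg hb x, ← ebp_decP_add_ebm_decM hg hb y]
  simp only [hD.add_left, hD.add_right, hD'.add_left, hD'.add_right, hpp, hpm, hmp, hmm]

lemma nabP_add_left (hg : IsRiemannian ev gf gs) (hnab : IsLeviCivita act lie ev gf nab)
    (hiph : IsThreeFormMap ev iph) (X X' Y : Xv) :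
    nabP gs nab iph (X + X') Y = nabP gs nab iph X Y + nabP gs nab iph X' Y := by
  simp only [nabP, hnab.add_left, hiph.add_left, hg.sharp_add]
  module

lemma nabM_add_left (hg : IsRiemannian ev gf gs) (hnab : IsLeviCivita act lie ev gf nab)
    (hiph : IsThreeFormMap ev iph) (X X' Y : Xv) :
    nabM gs nab iph (X + X') Y = nabM gs nab iph X Y + nabM gs nab iph X' Y := by
  simp only [nabM, hnab.add_left, hiph.add_left, hg.sharp_add]
  module

lemma nabP_add_right (hg : IsRiemannian ev gf gs) (hnab : IsLeviCivita act lie ev gf nab)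
    (hiph : IsThreeFormMap ev iph) (X Y Y' : Xv) :
    nabP gs nab iph X (Y + Y') = nabP gs nab iph X Y + nabP gs nab iph X Y' := by
  simp only [nabP, hnab.add_right, hiph.add_right, hg.sharp_add]
  module

lemma nabM_add_right (hg : IsRiemannian ev gf gs) (hnab : IsLeviCivita act lie ev gf nab)
    (hiph : IsThreeFormMap ev iph) (X Y Y' : Xv) :
    nabM gs nab iph X (Y + Y') = nabM gs nab iph X Y + nabM gs nab iph X Y' := by
  simp only [nabM, hnab.add_right, hiph.add_right, hg.sharp_add]
  module

lemma Dphib_apply_ebp (hg : IsRiemannian ev gf gs) (hb : IsTwoFormMap ev ib)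
    (hnab : IsLeviCivita act lie ev gf nab) (hiph : IsThreeFormMap ev iph) (x : TT Xv Θ) (Y : Xv) :
    Dphib gf gs ib nab iph x (ebp gf ib Y)
      = ebp gf ib (nab (decP gs ib x) Y + nabP gs nab iph (decM gs ib x) Y) := by
  simp only [Dphib, decP_ebp hg, decM_ebp hg, nabM, hnab.zero_right, hiph.zero_right,
    hg.sharp_zero, smul_zero, sub_zero, ebm_zero hg hb, add_zero, ebp_add hg hb]

lemma Dphib_apply_ebm (hg : IsRiemannian ev gf gs) (hb : IsTwoFormMap ev ib)
    (hnab : IsLeviCivita act lie ev gf nab) (hiph : IsThreeFormMap ev iph) (x : TT Xv Θ) (Y : Xv) :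
    Dphib gf gs ib nab iph x (ebm gf ib Y)
      = ebm gf ib (nabM gs nab iph (decP gs ib x) Y + nab (decM gs ib x) Y) := by
  simp only [Dphib, decP_ebm hg, decM_ebm hg, nabP, hnab.zero_right, hiph.zero_right,
    hg.sharp_zero, smul_zero, add_zero, ebp_zero hg hb, zero_add, ebm_add hg hb]

lemma Dphib_ebp_ebp (hg : IsRiemannian ev gf gs) (hb : IsTwoFormMap ev ib)
    (hnab : IsLeviCivita act lie ev gf nab) (hiph : IsThreeFormMap ev iph) (X Y : Xv) :
    Dphib gf gs ib nab iph (ebp gf ib X) (ebp gf ib Y) = ebp gf ib (nab X Y) := by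
  simp only [Dphib_apply_ebp hg hb hnab hiph, decP_ebp hg, decM_ebp hg, nabP, hnab.zero_left,
    hiph.zero_left, hg.sharp_zero, smul_zero, add_zero]

lemma Dphib_ebm_ebm (hg : IsRiemannian ev gf gs) (hb : IsTwoFormMap ev ib)
    (hnab : IsLeviCivita act lie ev gf nab) (hiph : IsThreeFormMap ev iph) (X Y : Xv) :
    Dphib gf gs ib nab iph (ebm gf ib X) (ebm gf ib Y) = ebm gf ib (nab X Y) := by
  simp only [Dphib_apply_ebm hg hb hnab hiph, decP_ebm hg, decM_ebm hg, nabM, hnab.zero_left,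
    hiph.zero_left, hg.sharp_zero, smul_zero, sub_zero, zero_add]

lemma Dphib_ebm_ebp (hg : IsRiemannian ev gf gs) (hb : IsTwoFormMap ev ib)
    (hnab : IsLeviCivita act lie ev gf nab) (hiph : IsThreeFormMap ev iph) (X Y : Xv) :
    Dphib gf gs ib nab iph (ebm gf ib X) (ebp gf ib Y) = ebp gf ib (nabP gs nab iph X Y) := by
  rw [Dphib_apply_ebp hg hb hnab hiph, decP_ebm hg, decM_ebm hg, hnab.zero_left, zero_add]

lemma Dphib_ebp_ebm (hg : IsRiemannian ev gf gs) (hb : IsTwoFormMap ev ib)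
    (hnab : IsLeviCivita act lie ev gf nab) (hiph : IsThreeFormMap ev iph) (X Y : Xv) :
    Dphib gf gs ib nab iph (ebp gf ib X) (ebm gf ib Y) = ebm gf ib (nabM gs nab iph X Y) := by
  rw [Dphib_apply_ebm hg hb hnab hiph, decP_ebp hg, decM_ebp hg, hnab.zero_left, add_zero]

lemma Dphib_torsionFree (hev : IsEvStructure ev) (hg : IsRiemannian ev gf gs)
    (hnab : IsLeviCivita act lie ev gf nab) (hiph : IsThreeFormMap ev iph) :
    TorsionFree lie (Dphib gf gs ib nab iph) := by
  intro x y
  rw [diamond, Prod.fst_sub, Dphib_fst hnab, Dphib_fst hnab,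
    hiph.antisymm hev (decM gs ib y), hiph.antisymm hev (decP gs ib y), hg.sharp_neg,
    hg.sharp_neg, ← hnab.torsion_free]
  module

end

variable [Algebra ℝ C]

lemma IsDiffStructure.act_zero (hds : IsDiffStructure act lie) (X : Xv) : act X 0 = 0 :=
  map_zero (AddMonoidHom.mk' (act X) (hds.act_add_right X))

lemma IsDiffStructure.act_neg (hds : IsDiffStructure act lie) (X : Xv) (f : C) :
    act X (-f) = -act X f :=
  map_neg (AddMonoidHom.mk' (act X) (hds.act_add_right X)) f

lemma pairTT_add_left (hev : IsEvStructure ev) (x y z : TT Xv Θ) :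
    pairTT ev (x + y) z = pairTT ev x z + pairTT ev y z := by
  simp only [pairTT, Prod.fst_add, Prod.snd_add, hev.add_left, hev.add_right, ← smul_add]
  ring_nf

lemma pairTT_add_right (hev : IsEvStructure ev) (x y z : TT Xv Θ) :
    pairTT ev x (y + z) = pairTT ev x y + pairTT ev x z := by
  simp only [pairTT_comm x, pairTT_add_left hev]

lemma pairTT_ebp_right (hev : IsEvStructure ev) (hg : IsRiemannian ev gf gs)
    (hb : IsTwoFormMap ev ib) (w : TT Xv Θ) (Z : Xv) :
    pairTT ev w (ebp gf ib Z) = (2:ℝ)⁻¹ • ev (w.2 - (ebm gf ib w.1).2) Z := by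
  simp only [pairTT, ebp, ebm, hev.add_left, hev.sub_left, hb.skew Z, hg.symm Z]
  ring_nf

lemma pairTT_ebm_right (hev : IsEvStructure ev) (hg : IsRiemannian ev gf gs)
    (hb : IsTwoFormMap ev ib) (w : TT Xv Θ) (Z : Xv) :
    pairTT ev w (ebm gf ib Z) = (2:ℝ)⁻¹ • ev (w.2 - (ebp gf ib w.1).2) Z := by
  simp only [pairTT, ebp, ebm, hev.add_left, hev.sub_left, hb.skew Z, hg.symm Z]
  ring_nf

lemma GbForm_comm (hg : IsRiemannian ev gf gs) (x y : TT Xv Θ) :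
    GbForm ev gf gs ib x y = GbForm ev gf gs ib y x := by
  rw [GbForm, GbForm, hg.symm, hg.ev_sharp_comm]

lemma GbForm_add_left (hev : IsEvStructure ev) (hg : IsRiemannian ev gf gs)
    (hb : IsTwoFormMap ev ib) (x y z : TT Xv Θ) :
    GbForm ev gf gs ib (x + y) z = GbForm ev gf gs ib x z + GbForm ev gf gs ib y z := by
  simp only [GbForm, Prod.fst_add, Prod.snd_add, hg.add, hb.add, add_sub_add_comm, hev.add_left,
    ← smul_add]
  ring_nf

lemma GbForm_add_right (hev : IsEvStructure ev) (hg : IsRiemannian ev gf gs)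
    (hb : IsTwoFormMap ev ib) (x y z : TT Xv Θ) :
    GbForm ev gf gs ib x (y + z) = GbForm ev gf gs ib x y + GbForm ev gf gs ib x z := by
  simp only [GbForm_comm hg x, GbForm_add_left hev hg hb]

lemma GbForm_ebp_right (hev : IsEvStructure ev) (hg : IsRiemannian ev gf gs)
    (hb : IsTwoFormMap ev ib) (w : TT Xv Θ) (Z : Xv) :
    GbForm ev gf gs ib w (ebp gf ib Z) = pairTT ev w (ebp gf ib Z) := by
  rw [pairTT_ebp_right hev hg hb]
  simp only [GbForm, ebp, ebm, add_sub_cancel_left, hg.sharp_flat, hev.sub_left, hg.symm w.1 Z]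
  ring_nf

lemma GbForm_ebm_right (hev : IsEvStructure ev) (hg : IsRiemannian ev gf gs)
    (hb : IsTwoFormMap ev ib) (w : TT Xv Θ) (Z : Xv) :
    GbForm ev gf gs ib w (ebm gf ib Z) = -pairTT ev w (ebm gf ib Z) := by
  rw [pairTT_ebm_right hev hg hb]
  simp only [GbForm, ebp, ebm, sub_sub_cancel_left, hg.sharp_neg, hg.sharp_flat, hev.neg_right,
    hev.sub_left, hev.add_left]
  module

lemma pairTT_ebp_ebp (hev : IsEvStructure ev) (hg : IsRiemannian ev gf gs)
    (hb : IsTwoFormMap ev ib) (Y Z : Xv) :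
    pairTT ev (ebp gf ib Y) (ebp gf ib Z) = gsc ev gf Y Z := by
  rw [pairTT_ebp_right hev hg hb]
  simp only [ebp, ebm, gsc, add_sub_sub_cancel, hev.add_left]
  module

lemma pairTT_ebm_ebm (hev : IsEvStructure ev) (hg : IsRiemannian ev gf gs)
    (hb : IsTwoFormMap ev ib) (Y Z : Xv) :
    pairTT ev (ebm gf ib Y) (ebm gf ib Z) = -gsc ev gf Y Z := by
  rw [pairTT_ebm_right hev hg hb]
  simp only [ebp, ebm, gsc, sub_add_eq_sub_sub, sub_sub_cancel_left, hev.sub_left, hev.neg_left]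
  module

lemma pairTT_ebm_ebp (hev : IsEvStructure ev) (hg : IsRiemannian ev gf gs)
    (hb : IsTwoFormMap ev ib) (Y Z : Xv) : pairTT ev (ebm gf ib Y) (ebp gf ib Z) = 0 := by
  rw [pairTT_ebp_right hev hg hb]
  simp only [ebm, sub_self, hev.zero_left, smul_zero]

lemma pairTT_ebp_ebm (hev : IsEvStructure ev) (hg : IsRiemannian ev gf gs)
    (hb : IsTwoFormMap ev ib) (Y Z : Xv) : pairTT ev (ebp gf ib Y) (ebm gf ib Z) = 0 := by
  rw [pairTT_ebm_right hev hg hb]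
  simp only [ebp, sub_self, hev.zero_left, smul_zero]

lemma eq_ebp_of_pairTT_ebm (hev : IsEvStructure ev) (hg : IsRiemannian ev gf gs)
    (hb : IsTwoFormMap ev ib) {w : TT Xv Θ} (h : ∀ Z, pairTT ev w (ebm gf ib Z) = 0) :
    w = ebp gf ib w.1 := by
  have h₀ : w.2 - (ebp gf ib w.1).2 = 0 := hev.ev_injective _ _ fun Z => by
    have hZ := h Z
    rw [pairTT_ebm_right hev hg hb] at hZ
    rw [hev.zero_left, (smul_eq_zero.mp hZ).resolve_left (by norm_num)]
  exact Prod.ext rfl (sub_eq_zero.mp h₀)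

lemma eq_ebm_of_pairTT_ebp (hev : IsEvStructure ev) (hg : IsRiemannian ev gf gs)
    (hb : IsTwoFormMap ev ib) {w : TT Xv Θ} (h : ∀ Z, pairTT ev w (ebp gf ib Z) = 0) :
    w = ebm gf ib w.1 := by
  have h₀ : w.2 - (ebm gf ib w.1).2 = 0 := hev.ev_injective _ _ fun Z => by
    have hZ := h Z
    rw [pairTT_ebp_right hev hg hb] at hZ
    rw [hev.zero_left, (smul_eq_zero.mp hZ).resolve_left (by norm_num)]
  exact Prod.ext rfl (sub_eq_zero.mp h₀)

lemma IsMetricAlong.add (hds : IsDiffStructure act lie) (hev : IsEvStructure ev)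
    (hg : IsRiemannian ev gf gs) {A₁ A₂ : Xv} {N₁ N₂ : Xv → Xv}
    (h₁ : IsMetricAlong act ev gf A₁ N₁) (h₂ : IsMetricAlong act ev gf A₂ N₂) :
    IsMetricAlong act ev gf (A₁ + A₂) (fun Y => N₁ Y + N₂ Y) := by
  intro Y Z
  rw [hds.act_add_left, h₁, h₂]
  simp only [gsc, hg.add, hev.add_left, hev.add_right]
  ring

theorem IsLeviCivita.eq_of_torsion_of_metric (hev : IsEvStructure ev) (hg : IsRiemannian ev gf gs)
    (hnab : IsLeviCivita act lie ev gf nab) (N : Xv → Xv → Xv)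
    (htor : ∀ A B, N A B - N B A = lie A B) (hmet : ∀ A, IsMetricAlong act ev gf A (N A))
    (A B : Xv) : N A B = nab A B := by
  have hsymm (A B Z : Xv) :
      gsc ev gf (N A B - nab A B) Z = gsc ev gf (N B A - nab B A) Z := by
    rw [sub_eq_sub_iff_sub_eq_sub.mpr (by rw [htor, hnab.torsion_free])]
  have hF := eq_zero_of_symm_of_skew _ hsymm (fun A => hnab.gsc_sub_skew hev hg (hmet A)) A B
  exact sub_eq_zero.mp (hg.eq_zero_of_gsc hev hF)

lemma IsLeviCivita.flat_nab_sharp (hev : IsEvStructure ev) (hg : IsRiemannian ev gf gs)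
    (hnab : IsLeviCivita act lie ev gf nab) {nabT : Xv → Θ → Θ}
    (hnabT : IsNabTheta act ev nab nabT) (X : Xv) (η : Θ) : gf (nab X (gs η)) = nabT X η :=
  hev.ev_injective _ _ fun Z => by
    have h := hnab.metric X (gs η) Z
    simp only [gsc, hg.flat_sharp] at h
    rw [hnabT.formula]
    linear_combination -h

section MetricConn

variable {D : TT Xv Θ → TT Xv Θ → TT Xv Θ}

lemma IsMetricConn.pairTT_apply_ebp_ebm (hds : IsDiffStructure act lie) (hev : IsEvStructure ev)
    (hg : IsRiemannian ev gf gs) (hb : IsTwoFormMap ev ib) (hD : IsMetricConn act ev gf gs ib D)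
    (x : TT Xv Θ) (Y Z : Xv) :
    pairTT ev (D x (ebp gf ib Y)) (ebm gf ib Z) = 0 ∧
      pairTT ev (ebp gf ib Y) (D x (ebm gf ib Z)) = 0 := by
  have h₁ := hD.1 x (ebp gf ib Y) (ebm gf ib Z)
  have h₂ := hD.2 x (ebp gf ib Y) (ebm gf ib Z)
  rw [pairTT_ebp_ebm hev hg hb, hds.act_zero] at h₁
  rw [GbForm_ebm_right hev hg hb, pairTT_ebp_ebm hev hg hb, neg_zero, hds.act_zero,
    GbForm_ebm_right hev hg hb, GbForm_comm hg (ebp gf ib Y), GbForm_ebp_right hev hg hb,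
    pairTT_comm (D x (ebm gf ib Z))] at h₂
  -- `G^b = ±⟨,⟩` as soon as one argument lies in `C±`, so `h₁, h₂` read `0 = a + b`, `0 = -a + b`.
  have ha := eq_zero_of_eq_neg (a := pairTT ev (D x (ebp gf ib Y)) (ebm gf ib Z))
    (by linear_combination h₂ - h₁)
  exact ⟨ha, by linear_combination -h₁ - ha⟩

lemma IsMetricConn.apply_ebp (hds : IsDiffStructure act lie) (hev : IsEvStructure ev)
    (hg : IsRiemannian ev gf gs) (hb : IsTwoFormMap ev ib) (hD : IsMetricConn act ev gf gs ib D)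
    (x : TT Xv Θ) (Y : Xv) : D x (ebp gf ib Y) = ebp gf ib (D x (ebp gf ib Y)).1 :=
  eq_ebp_of_pairTT_ebm hev hg hb fun Z => (hD.pairTT_apply_ebp_ebm hds hev hg hb x Y Z).1

lemma IsMetricConn.apply_ebm (hds : IsDiffStructure act lie) (hev : IsEvStructure ev)
    (hg : IsRiemannian ev gf gs) (hb : IsTwoFormMap ev ib) (hD : IsMetricConn act ev gf gs ib D)
    (x : TT Xv Θ) (Z : Xv) : D x (ebm gf ib Z) = ebm gf ib (D x (ebm gf ib Z)).1 :=
  eq_ebm_of_pairTT_ebp hev hg hb fun Y => by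
    rw [pairTT_comm]
    exact (hD.pairTT_apply_ebp_ebm hds hev hg hb x Y Z).2

lemma IsMetricConn.isMetricAlong_fst_ebp (hds : IsDiffStructure act lie)
    (hev : IsEvStructure ev) (hg : IsRiemannian ev gf gs) (hb : IsTwoFormMap ev ib)
    (hD : IsMetricConn act ev gf gs ib D) (x : TT Xv Θ) :
    IsMetricAlong act ev gf x.1 (fun Y => (D x (ebp gf ib Y)).1) := by
  intro Y Z
  have h := hD.1 x (ebp gf ib Y) (ebp gf ib Z)
  rwa [hD.apply_ebp hds hev hg hb x Y, hD.apply_ebp hds hev hg hb x Z, pairTT_ebp_ebp hev hg hb,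
    pairTT_ebp_ebp hev hg hb, pairTT_ebp_ebp hev hg hb] at h

lemma IsMetricConn.isMetricAlong_fst_ebm (hds : IsDiffStructure act lie)
    (hev : IsEvStructure ev) (hg : IsRiemannian ev gf gs) (hb : IsTwoFormMap ev ib)
    (hD : IsMetricConn act ev gf gs ib D) (x : TT Xv Θ) :
    IsMetricAlong act ev gf x.1 (fun Y => (D x (ebm gf ib Y)).1) := by
  intro Y Z
  have h := hD.1 x (ebm gf ib Y) (ebm gf ib Z)
  rw [hD.apply_ebm hds hev hg hb x Y, hD.apply_ebm hds hev hg hb x Z, pairTT_ebm_ebm hev hg hb,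
    pairTT_ebm_ebm hev hg hb, pairTT_ebm_ebm hev hg hb, hds.act_neg] at h
  linear_combination -h

lemma fst_apply_ebp_ebp (hds : IsDiffStructure act lie) (hev : IsEvStructure ev)
    (hg : IsRiemannian ev gf gs) (hb : IsTwoFormMap ev ib) (hnab : IsLeviCivita act lie ev gf nab)
    (htf : TorsionFree lie D) (hmet : IsMetricConn act ev gf gs ib D) (A B : Xv) :
    (D (ebp gf ib A) (ebp gf ib B)).1 = nab A B :=
  hnab.eq_of_torsion_of_metric hev hg (fun A B => (D (ebp gf ib A) (ebp gf ib B)).1)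
    (fun A B => htf (ebp gf ib A) (ebp gf ib B))
    (fun A => hmet.isMetricAlong_fst_ebp hds hev hg hb (ebp gf ib A)) A B

lemma fst_apply_ebm_ebm (hds : IsDiffStructure act lie) (hev : IsEvStructure ev)
    (hg : IsRiemannian ev gf gs) (hb : IsTwoFormMap ev ib) (hnab : IsLeviCivita act lie ev gf nab)
    (htf : TorsionFree lie D) (hmet : IsMetricConn act ev gf gs ib D) (A B : Xv) :
    (D (ebm gf ib A) (ebm gf ib B)).1 = nab A B :=
  hnab.eq_of_torsion_of_metric hev hg (fun A B => (D (ebm gf ib A) (ebm gf ib B)).1)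
    (fun A B => htf (ebm gf ib A) (ebm gf ib B))
    (fun A => hmet.isMetricAlong_fst_ebm hds hev hg hb (ebm gf ib A)) A B

end MetricConn

section ThreeForm

variable [Module ℝ Θ] [IsScalarTower ℝ C Θ]

lemma IsEvStructure.smul_real_left (hev : IsEvStructure ev) (r : ℝ) (ξ : Θ) (X : Xv) :
    ev (r • ξ) X = r • ev ξ X :=
  map_real_smul (f := (ev · X)) (hev.smul_left · · X) r ξ

def threeFormOf (gf ib : Xv → Θ) (nab : Xv → Xv → Xv) (D : TT Xv Θ → TT Xv Θ → TT Xv Θ)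
    (X Y : Xv) : Θ :=
  (2:ℝ) • gf ((D (ebm gf ib X) (ebp gf ib Y)).1 - nab X Y)

variable {D : TT Xv Θ → TT Xv Θ → TT Xv Θ}

lemma ev_threeFormOf (hev : IsEvStructure ev) (X Y Z : Xv) :
    ev (threeFormOf gf ib nab D X Y) Z
      = (2:ℝ) • gsc ev gf ((D (ebm gf ib X) (ebp gf ib Y)).1 - nab X Y) Z :=
  hev.smul_real_left _ _ _

lemma threeFormOf_alt23 (hds : IsDiffStructure act lie) (hev : IsEvStructure ev)
    (hg : IsRiemannian ev gf gs) (hb : IsTwoFormMap ev ib) (hnab : IsLeviCivita act lie ev gf nab)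
    (hmet : IsMetricConn act ev gf gs ib D) (X Y Z : Xv) :
    ev (threeFormOf gf ib nab D X Y) Z = -ev (threeFormOf gf ib nab D X Z) Y := by
  have hX : IsMetricAlong act ev gf X _ := hmet.isMetricAlong_fst_ebp hds hev hg hb (ebm gf ib X)
  rw [ev_threeFormOf hev, ev_threeFormOf hev, hnab.gsc_sub_skew hev hg hX, smul_neg]

lemma threeFormOf_alt12 (hds : IsDiffStructure act lie) (hev : IsEvStructure ev)
    (hg : IsRiemannian ev gf gs) (hb : IsTwoFormMap ev ib) (hnab : IsLeviCivita act lie ev gf nab)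
    (htf : TorsionFree lie D) (hmet : IsMetricConn act ev gf gs ib D) (X Y Z : Xv) :
    ev (threeFormOf gf ib nab D X Y) Z = -ev (threeFormOf gf ib nab D Y X) Z := by
  have hswap (A B E : Xv) :
      ev (threeFormOf gf ib nab D A B) E = -ev (threeFormOf gf ib nab D E B) A := by
    have hB : IsMetricAlong act ev gf B _ :=
      hmet.isMetricAlong_fst_ebm hds hev hg hb (ebp gf ib B)
    have hskew := hnab.gsc_sub_skew hev hg hB A E
    rw [fst_apply_ebp_ebm hnab htf, fst_apply_ebp_ebm hnab htf] at hskew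
    rw [ev_threeFormOf hev, ev_threeFormOf hev, hskew, smul_neg]
  calc ev (threeFormOf gf ib nab D X Y) Z = -ev (threeFormOf gf ib nab D Z Y) X := hswap X Y Z
    _ = ev (threeFormOf gf ib nab D Z X) Y := by
      rw [threeFormOf_alt23 hds hev hg hb hnab hmet Z Y X, neg_neg]
    _ = -ev (threeFormOf gf ib nab D Y X) Z := hswap Z X Y

lemma isThreeFormMap_threeFormOf (hds : IsDiffStructure act lie) (hev : IsEvStructure ev)
    (hg : IsRiemannian ev gf gs) (hb : IsTwoFormMap ev ib) (hnab : IsLeviCivita act lie ev gf nab)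
    (hconn : IsGenConn act D) (htf : TorsionFree lie D) (hmet : IsMetricConn act ev gf gs ib D) :
    IsThreeFormMap ev (threeFormOf gf ib nab D) where
  add_left X X' Y := by
    simp only [threeFormOf, ebm_add hg hb, hconn.add_left, Prod.fst_add, hnab.add_left,
      add_sub_add_comm, hg.add, smul_add]
  smul_left f X Y := by
    simp only [threeFormOf, ebm_smul hg hb, hconn.smul_left, Prod.smul_fst, hnab.smul_left,
      ← smul_sub, hg.smul, smul_comm _ f]
  add_right X Y Y' := by
    simp only [threeFormOf, ebp_add hg hb, hconn.add_right, Prod.fst_add, hnab.add_right,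
      add_sub_add_comm, hg.add, smul_add]
  smul_right X f Y := by
    rw [threeFormOf, threeFormOf, ebp_smul hg hb, hconn.leibniz]
    simp only [Prod.fst_add, Prod.smul_fst, ebm, ebp, hnab.leibniz, add_sub_add_left_eq_sub,
      ← smul_sub, hg.smul, smul_comm _ f]
  alt12 := threeFormOf_alt12 hds hev hg hb hnab htf hmet
  alt23 := threeFormOf_alt23 hds hev hg hb hnab hmet

end ThreeForm

variable [Module ℝ Xv]

lemma isMetricConn_of_eigen (hds : IsDiffStructure act lie) (hev : IsEvStructure ev)
    (hg : IsRiemannian ev gf gs) (hb : IsTwoFormMap ev ib) {D : TT Xv Θ → TT Xv Θ → TT Xv Θ}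
    (hadd : ∀ x y z, D x (y + z) = D x y + D x z) {P M : TT Xv Θ → Xv → Xv}
    (hP : ∀ x Y, D x (ebp gf ib Y) = ebp gf ib (P x Y))
    (hM : ∀ x Y, D x (ebm gf ib Y) = ebm gf ib (M x Y))
    (hPmet : ∀ x, IsMetricAlong act ev gf x.1 (P x))
    (hMmet : ∀ x, IsMetricAlong act ev gf x.1 (M x)) :
    IsMetricConn act ev gf gs ib D := by
  constructor <;> intro x y z <;>
    rw [← ebp_decP_add_ebm_decM hg hb y, ← ebp_decP_add_ebm_decM hg hb z] <;>
    simp only [hadd, hP, hM, pairTT_add_left hev, pairTT_add_right hev, GbForm_add_left hev hg hb,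
      GbForm_add_right hev hg hb, GbForm_ebp_right hev hg hb, GbForm_ebm_right hev hg hb,
      pairTT_ebp_ebp hev hg hb, pairTT_ebp_ebm hev hg hb, pairTT_ebm_ebp hev hg hb,
      pairTT_ebm_ebm hev hg hb, neg_zero, neg_neg, add_zero, zero_add, hds.act_add_right,
      hds.act_neg] <;>
    rw [hPmet x (decP gs ib y) (decP gs ib z), hMmet x (decM gs ib y) (decM gs ib z)] <;>
    ring

variable [IsScalarTower ℝ C Xv]

lemma decP_smul (hg : IsRiemannian ev gf gs) (hb : IsTwoFormMap ev ib) (f : C) (x : TT Xv Θ) :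
    decP gs ib (f • x) = f • decP gs ib x := by
  simp only [decP, Prod.smul_fst, Prod.smul_snd, hb.smul, ← smul_sub, hg.sharp_smul, ← smul_add]
  rw [smul_comm]

lemma decM_smul (hg : IsRiemannian ev gf gs) (hb : IsTwoFormMap ev ib) (f : C) (x : TT Xv Θ) :
    decM gs ib (f • x) = f • decM gs ib x := by
  simp only [decM, Prod.smul_fst, Prod.smul_snd, hb.smul, ← smul_sub, hg.sharp_smul]
  rw [smul_comm]

lemma nabP_smul_left (hg : IsRiemannian ev gf gs) (hnab : IsLeviCivita act lie ev gf nab)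
    (hiph : IsThreeFormMap ev iph) (f : C) (X Y : Xv) :
    nabP gs nab iph (f • X) Y = f • nabP gs nab iph X Y := by
  simp only [nabP, hnab.smul_left, hiph.smul_left, hg.sharp_smul, smul_add, smul_comm _ f]

lemma nabM_smul_left (hg : IsRiemannian ev gf gs) (hnab : IsLeviCivita act lie ev gf nab)
    (hiph : IsThreeFormMap ev iph) (f : C) (X Y : Xv) :
    nabM gs nab iph (f • X) Y = f • nabM gs nab iph X Y := by
  simp only [nabM, hnab.smul_left, hiph.smul_left, hg.sharp_smul, smul_sub, smul_comm _ f]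

lemma nabP_leibniz (hg : IsRiemannian ev gf gs) (hnab : IsLeviCivita act lie ev gf nab)
    (hiph : IsThreeFormMap ev iph) (X : Xv) (f : C) (Y : Xv) :
    nabP gs nab iph X (f • Y) = act X f • Y + f • nabP gs nab iph X Y := by
  simp only [nabP, hnab.leibniz, hiph.smul_right, hg.sharp_smul, smul_add, smul_comm _ f,
    add_assoc]

lemma nabM_leibniz (hg : IsRiemannian ev gf gs) (hnab : IsLeviCivita act lie ev gf nab)
    (hiph : IsThreeFormMap ev iph) (X : Xv) (f : C) (Y : Xv) :
    nabM gs nab iph X (f • Y) = act X f • Y + f • nabM gs nab iph X Y := by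
  simp only [nabM, hnab.leibniz, hiph.smul_right, hg.sharp_smul, smul_sub, smul_comm _ f,
    add_sub_assoc]

lemma Dphib_isGenConn (hds : IsDiffStructure act lie) (hg : IsRiemannian ev gf gs)
    (hb : IsTwoFormMap ev ib) (hnab : IsLeviCivita act lie ev gf nab)
    (hiph : IsThreeFormMap ev iph) : IsGenConn act (Dphib gf gs ib nab iph) where
  add_left x x' y := by
    simp only [Dphib, decP_add hg hb, decM_add hg hb, hnab.add_left, nabP_add_left hg hnab hiph,
      nabM_add_left hg hnab hiph, ebp_add hg hb, ebm_add hg hb]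
    abel
  smul_left f x y := by
    simp only [Dphib, decP_smul hg hb, decM_smul hg hb, hnab.smul_left,
      nabP_smul_left hg hnab hiph, nabM_smul_left hg hnab hiph, ebp_smul hg hb, ebm_smul hg hb,
      smul_add]
  add_right x y y' := by
    simp only [Dphib, decP_add hg hb, decM_add hg hb, hnab.add_right, nabP_add_right hg hnab hiph,
      nabM_add_right hg hnab hiph, ebp_add hg hb, ebm_add hg hb]
    abel
  leibniz x f y := by
    have hact : act x.1 f • y
        = act (decP gs ib x) f • (ebp gf ib (decP gs ib y) + ebm gf ib (decM gs ib y))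
          + act (decM gs ib x) f • (ebp gf ib (decP gs ib y) + ebm gf ib (decM gs ib y)) := by
      rw [← add_smul, ← hds.act_add_left, decP_add_decM, ebp_decP_add_ebm_decM hg hb]
    simp only [Dphib, decP_smul hg hb, decM_smul hg hb, hnab.leibniz, nabP_leibniz hg hnab hiph,
      nabM_leibniz hg hnab hiph, ebp_add hg hb, ebm_add hg hb, ebp_smul hg hb, ebm_smul hg hb,
      hact, smul_add]
    abel

lemma IsEvStructure.smul_real_right (hev : IsEvStructure ev) (ξ : Θ) (r : ℝ) (X : Xv) :
    ev ξ (r • X) = r • ev ξ X :=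
  map_real_smul (f := ev ξ) (hev.smul_right ξ) r X

variable [Module ℝ Θ] [IsScalarTower ℝ C Θ]

lemma IsRiemannian.flat_smul_real (hg : IsRiemannian ev gf gs) (r : ℝ) (X : Xv) :
    gf (r • X) = r • gf X :=
  map_real_smul hg.smul r X

lemma IsRiemannian.sharp_smul_real (hg : IsRiemannian ev gf gs) (r : ℝ) (ξ : Θ) :
    gs (r • ξ) = r • gs ξ :=
  map_real_smul hg.sharp_smul r ξ

lemma isMetricAlong_nabP (hev : IsEvStructure ev) (hg : IsRiemannian ev gf gs)
    (hnab : IsLeviCivita act lie ev gf nab) (hiph : IsThreeFormMap ev iph) (A : Xv) :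
    IsMetricAlong act ev gf A (nabP gs nab iph A) := by
  intro Y Z
  rw [hnab.metric A Y Z]
  simp only [gsc, nabP, hg.add, hev.add_left, hev.add_right, hg.flat_smul_real, hg.flat_sharp,
    hev.smul_real_left, hev.smul_real_right, hg.ev_flat_sharp, hiph.alt23 A Z Y]
  module

lemma isMetricAlong_nabM (hev : IsEvStructure ev) (hg : IsRiemannian ev gf gs)
    (hnab : IsLeviCivita act lie ev gf nab) (hiph : IsThreeFormMap ev iph) (A : Xv) :
    IsMetricAlong act ev gf A (nabM gs nab iph A) := by
  intro Y Z
  rw [hnab.metric A Y Z]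
  simp only [gsc, nabM, hg.flat_sub, hev.sub_left, hev.sub_right, hg.flat_smul_real,
    hg.flat_sharp, hev.smul_real_left, hev.smul_real_right, hg.ev_flat_sharp, hiph.alt23 A Z Y]
  module

lemma Dphib_isMetricConn (hds : IsDiffStructure act lie) (hev : IsEvStructure ev)
    (hg : IsRiemannian ev gf gs) (hb : IsTwoFormMap ev ib) (hnab : IsLeviCivita act lie ev gf nab)
    (hiph : IsThreeFormMap ev iph) : IsMetricConn act ev gf gs ib (Dphib gf gs ib nab iph) :=
  isMetricConn_of_eigen hds hev hg hb (Dphib_isGenConn hds hg hb hnab hiph).add_right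
    (Dphib_apply_ebp hg hb hnab hiph) (Dphib_apply_ebm hg hb hnab hiph)
    (fun x => decP_add_decM (gs := gs) (ib := ib) x ▸
      (hnab.isMetricAlong _).add hds hev hg (isMetricAlong_nabP hev hg hnab hiph _))
    (fun x => decP_add_decM (gs := gs) (ib := ib) x ▸
      (isMetricAlong_nabM hev hg hnab hiph _).add hds hev hg (hnab.isMetricAlong _))

theorem Dphib_ebMap (hev : IsEvStructure ev) (hg : IsRiemannian ev gf gs)
    (hb : IsTwoFormMap ev ib) (hnab : IsLeviCivita act lie ev gf nab)
    (hiph : IsThreeFormMap ev iph) {nabT : Xv → Θ → Θ} (hnabT : IsNabTheta act ev nab nabT)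
    (X Y : Xv) (ξ η : Θ) :
    Dphib gf gs ib nab iph (ebMap ib (X, ξ)) (ebMap ib (Y, η))
      = ebMap ib (nab X Y + (4:ℝ)⁻¹ • gs (iph X (gs η) - iph (gs ξ) Y),
          nabT X η + (4:ℝ)⁻¹ • (iph X Y - iph (gs ξ) (gs η))) := by
  have hX : decP gs ib (ebMap ib (X, ξ)) + decM gs ib (ebMap ib (X, ξ)) = X := decP_add_decM _
  have hY : decP gs ib (ebMap ib (Y, η)) + decM gs ib (ebMap ib (Y, η)) = Y := decP_add_decM _
  have hξ : decP gs ib (ebMap ib (X, ξ)) - decM gs ib (ebMap ib (X, ξ)) = gs ξ := by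
    rw [decP_sub_decM, ebMap, add_sub_cancel_right]
  have hη : decP gs ib (ebMap ib (Y, η)) - decM gs ib (ebMap ib (Y, η)) = gs η := by
    rw [decP_sub_decM, ebMap, add_sub_cancel_right]
  rw [← hnab.flat_nab_sharp hev hg hnabT, Dphib,
    add_right_comm _ (ebm gf ib _), add_assoc, ← ebp_add hg hb, ← ebm_add hg hb,
    ebp_add_ebm hg hb]
  generalize decP gs ib (ebMap ib (X, ξ)) = P, decM gs ib (ebMap ib (X, ξ)) = M,
    decP gs ib (ebMap ib (Y, η)) = Q, decM gs ib (ebMap ib (Y, η)) = N at *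
  subst hX hY
  rw [← hξ, ← hη, ← hg.flat_sharp (iph (P + M) (Q + N) - iph (P - M) (Q - N)),
    ← hg.flat_smul_real, ← hg.add]
  refine congrArg (ebMap ib) (Prod.ext ?_ (congrArg gf ?_)) <;>
  · simp only [nabP, nabM, hnab.add_left, hnab.add_right, hnab.sub_right, hiph.add_left,
      hiph.add_right, hiph.sub_left, hiph.sub_right, hg.sharp_add, hg.sharp_sub]
    module

section Converse

variable {D : TT Xv Θ → TT Xv Θ → TT Xv Θ}

lemma half_sharp_threeFormOf (hg : IsRiemannian ev gf gs) (X Y : Xv) :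
    (2:ℝ)⁻¹ • gs (threeFormOf gf ib nab D X Y) = (D (ebm gf ib X) (ebp gf ib Y)).1 - nab X Y := by
  rw [threeFormOf, hg.sharp_smul_real, hg.sharp_flat, smul_smul, inv_mul_cancel₀ two_ne_zero,
    one_smul]

lemma threeFormOf_Dphib (hg : IsRiemannian ev gf gs) (hb : IsTwoFormMap ev ib)
    (hnab : IsLeviCivita act lie ev gf nab) (hiph : IsThreeFormMap ev iph) :
    threeFormOf gf ib nab (Dphib gf gs ib nab iph) = iph := by
  funext X Y
  rw [threeFormOf, Dphib_ebm_ebp hg hb hnab hiph]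
  simp only [ebp, nabP, add_sub_cancel_left, hg.flat_smul_real, hg.flat_sharp, smul_smul]
  norm_num

theorem eq_Dphib_threeFormOf (hds : IsDiffStructure act lie) (hev : IsEvStructure ev)
    (hg : IsRiemannian ev gf gs) (hb : IsTwoFormMap ev ib) (hnab : IsLeviCivita act lie ev gf nab)
    (hconn : IsGenConn act D) (htf : TorsionFree lie D) (hmet : IsMetricConn act ev gf gs ib D) :
    D = Dphib gf gs ib nab (threeFormOf gf ib nab D) := by
  have hφ := isThreeFormMap_threeFormOf hds hev hg hb hnab hconn htf hmet
  refine hconn.ext_of_eigen hg hb (Dphib_isGenConn hds hg hb hnab hφ) ?_ ?_ ?_ ?_ <;> intro A B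
  · rw [Dphib_ebp_ebp hg hb hnab hφ, hmet.apply_ebp hds hev hg hb,
      fst_apply_ebp_ebp hds hev hg hb hnab htf hmet]
  · rw [Dphib_ebp_ebm hg hb hnab hφ, nabM, hφ.antisymm hev, hg.sharp_neg, smul_neg,
      sub_neg_eq_add, half_sharp_threeFormOf hg, ← fst_apply_ebp_ebm hnab htf, add_sub_cancel,
      ← hmet.apply_ebm hds hev hg hb]
  · rw [Dphib_ebm_ebp hg hb hnab hφ, nabP, half_sharp_threeFormOf hg, add_sub_cancel,
      ← hmet.apply_ebp hds hev hg hb]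
  · rw [Dphib_ebm_ebm hg hb hnab hφ, hmet.apply_ebm hds hev hg hb,
      fst_apply_ebm_ebm hds hev hg hb hnab htf hmet]

end Converse

end Structures

theorem stmt_1
    {C : Type} [CommRing C] [Algebra ℝ C]
    {Xv : Type} [AddCommGroup Xv] [Module C Xv] [Module ℝ Xv] [IsScalarTower ℝ C Xv]
    {Θ : Type} [AddCommGroup Θ] [Module C Θ] [Module ℝ Θ] [IsScalarTower ℝ C Θ]
    (act : Xv → C → C) (lie : Xv → Xv → Xv) (ev : Θ → Xv → C)
    (hds : IsDiffStructure act lie) (hev : IsEvStructure ev)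
    (gf : Xv → Θ) (gs : Θ → Xv) (hg : IsRiemannian ev gf gs)
    (ib : Xv → Θ) (hb : IsTwoFormMap ev ib)
    (nab : Xv → Xv → Xv) (hnab : IsLeviCivita act lie ev gf nab)
    (nabT : Xv → Θ → Θ) (hnabT : IsNabTheta act ev nab nabT) :
    -- (1) each 3-form `φ` yields a `TM`-torsion free `G^b`-metric connection `D^{φ,b}`
    --     with the stated `G^b`-eigendecomposition and the stated formula in the
    --     splitting `𝕋M = TM ⊕ T*M`:
    (∀ iph : Xv → Xv → Θ, IsThreeFormMap ev iph →
      IsGenConn act (Dphib gf gs ib nab iph) ∧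
      TorsionFree lie (Dphib gf gs ib nab iph) ∧
      IsMetricConn act ev gf gs ib (Dphib gf gs ib nab iph) ∧
      (∀ X Y : Xv,
        Dphib gf gs ib nab iph (ebp gf ib X) (ebp gf ib Y) = ebp gf ib (nab X Y) ∧
        Dphib gf gs ib nab iph (ebm gf ib X) (ebm gf ib Y) = ebm gf ib (nab X Y) ∧
        Dphib gf gs ib nab iph (ebm gf ib X) (ebp gf ib Y)
          = ebp gf ib (nabP gs nab iph X Y) ∧
        Dphib gf gs ib nab iph (ebp gf ib X) (ebm gf ib Y)
          = ebm gf ib (nabM gs nab iph X Y)) ∧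
      (∀ (X Y : Xv) (ξ η : Θ),
        Dphib gf gs ib nab iph (ebMap ib (X, ξ)) (ebMap ib (Y, η))
          = ebMap ib
              (nab X Y + (4:ℝ)⁻¹ • gs (iph X (gs η) - iph (gs ξ) Y),
               nabT X η + (4:ℝ)⁻¹ • (iph X Y - iph (gs ξ) (gs η))))) ∧
    -- (2) conversely, every `TM`-torsion free `G^b`-metric connection is `D^{φ,b}`
    --     for exactly one 3-form `φ`, recovered by
    --     `φ(X,Y,Z) = 2 g(π(D_{x^{b−}} y^{b+}) − ∇_X Y, Z)`:
    (∀ D : TT Xv Θ → TT Xv Θ → TT Xv Θ,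
      IsGenConn act D → TorsionFree lie D → IsMetricConn act ev gf gs ib D →
      ∃ iph : Xv → Xv → Θ,
        (IsThreeFormMap ev iph ∧ D = Dphib gf gs ib nab iph ∧
          (∀ X Y Z : Xv,
            ev (iph X Y) Z
              = (2:ℝ) • gsc ev gf ((D (ebm gf ib X) (ebp gf ib Y)).1 - nab X Y) Z)) ∧
        (∀ iph' : Xv → Xv → Θ,
          IsThreeFormMap ev iph' → D = Dphib gf gs ib nab iph' → iph' = iph)) := by
  constructor
  · intro iph hiph
    exact ⟨Dphib_isGenConn hds hg hb hnab hiph, Dphib_torsionFree hev hg hnab hiph,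
      Dphib_isMetricConn hds hev hg hb hnab hiph,
      fun X Y => ⟨Dphib_ebp_ebp hg hb hnab hiph X Y, Dphib_ebm_ebm hg hb hnab hiph X Y,
        Dphib_ebm_ebp hg hb hnab hiph X Y, Dphib_ebp_ebm hg hb hnab hiph X Y⟩,
      Dphib_ebMap hev hg hb hnab hiph hnabT⟩
  · intro D hconn htf hmet
    refine ⟨threeFormOf gf ib nab D,
      ⟨isThreeFormMap_threeFormOf hds hev hg hb hnab hconn htf hmet,
        eq_Dphib_threeFormOf hds hev hg hb hnab hconn htf hmet, ev_threeFormOf hev⟩, ?_⟩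
    intro iph' hiph' hD
    rw [hD, threeFormOf_Dphib hg hb hnab hiph']

end GenGeom
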